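/- Let x, y : V → [k] be labelings of a finite graph G=(V,E) with nonnegative edge weights w, and for α ∈ [k] let x^α be the expansion of x towards y. Let E_z = {(u,v) ∈ E : z(u) ≠ z(v)}. Then Σ_{α∈[k]} Σ_{(u,v) ∈ E_{x^α} \ E_x} w(u,v) ≤ 2 · Σ_{(u,v) ∈ E_y \ E_x} w(u,v). -/

import Mathlib

open Finset

noncomputable def pottsEnergy {V : Type*} [Fintype V] {k : ℕ}
    (Edges : Finset (V × V)) (θ : V → Fin k → ℝ) (w : V × V → ℝ) (x : V → Fin k) : ℝ :=
  ∑ u, θ u (x u) + ∑ e ∈ Edges, w e * (if x e.1 ≠ x e.2 then 1 else 0)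

noncomputable def perturbW {V : Type*} {k : ℕ} (w : V × V → ℝ) (x : V → Fin k) :
    V × V → ℝ :=
  fun e => if x e.1 ≠ x e.2 then w e else 2 * w e

/-- `x` is an `α`-expansion of `x`. -/
def IsExpansion {V : Type*} {k : ℕ} (α : Fin k) (x x : V → Fin k) : Prop :=
  ∀ u, (x u = α → x u = α) ∧ (x u ≠ α → x u = x u)

/-- The expansion of `x` towards `y` with label `α`. -/
def expansionToward {V : Type*} {k : ℕ} [DecidableEq (Fin k)]
    (x y : V → Fin k) (α : Fin k) : V → Fin k :=
  fun u => if y u = α then α else x u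

/-- The set of edges cut by a labeling `z`. -/
def cutEdges {V : Type*} [DecidableEq V] {k : ℕ}
    (Edges : Finset (V × V)) (z : V → Fin k) : Finset (V × V) :=
  Edges.filter (fun e => z e.1 ≠ z e.2)


theorem mem_cutEdges {V : Type*} [DecidableEq V] {k : ℕ} {Edges : Finset (V × V)}
    {z : V → Fin k} {e : V × V} : e ∈ cutEdges Edges z ↔ e ∈ Edges ∧ z e.1 ≠ z e.2 :=
  mem_filter

/-- A newly cut edge must have exactly one endpoint relabelled to `α`, so `y` cuts it. -/
theorem cutEdges_expansionToward_sdiff_subset {V : Type*} [DecidableEq V] {k : ℕ}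
    (Edges : Finset (V × V)) (x y : V → Fin k) (α : Fin k) :
    cutEdges Edges (expansionToward x y α) \ cutEdges Edges x ⊆
      {e ∈ cutEdges Edges y \ cutEdges Edges x | y e.1 = α ∨ y e.2 = α} := by
  intro e he
  simp only [mem_sdiff, mem_cutEdges, not_and, not_not, mem_filter] at he ⊢
  obtain ⟨⟨hE, hcut⟩, hx⟩ := he
  unfold expansionToward at hcut
  by_cases h1 : y e.1 = α <;> by_cases h2 : y e.2 = α <;> simp_all [eq_comm]

theorem sum_sum_filter_endpoint_eq_two_mul {V β R : Type*} [Fintype β] [DecidableEq β]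
    [NonAssocSemiring R] (s : Finset (V × V)) (y : V → β) (hs : ∀ e ∈ s, y e.1 ≠ y e.2)
    (w : V × V → R) :
    ∑ α, ∑ e ∈ s with y e.1 = α ∨ y e.2 = α, w e = 2 * ∑ e ∈ s, w e := by
  simp_rw [sum_filter, mul_sum]
  rw [sum_comm]
  refine sum_congr rfl fun e he => ?_
  have hlabels : ({α | y e.1 = α ∨ y e.2 = α} : Finset β) = {y e.1, y e.2} := by
    ext α
    simp [eq_comm]
  rw [← sum_filter, hlabels, sum_pair (hs e he), two_mul]

theorem stmt4_general {V : Type*} [DecidableEq V] {k : ℕ}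
    (Edges : Finset (V × V)) (w : V × V → ℝ) (hw : ∀ e ∈ Edges, 0 ≤ w e)
    (x y : V → Fin k) :
    ∑ α : Fin k, ∑ e ∈ cutEdges Edges (expansionToward x y α) \ cutEdges Edges x, w e ≤
      2 * ∑ e ∈ cutEdges Edges y \ cutEdges Edges x, w e := by
  set T := cutEdges Edges y \ cutEdges Edges x
  calc ∑ α : Fin k, ∑ e ∈ cutEdges Edges (expansionToward x y α) \ cutEdges Edges x, w e
      ≤ ∑ α : Fin k, ∑ e ∈ T with y e.1 = α ∨ y e.2 = α, w e := by
        refine sum_le_sum fun α _ => sum_le_sum_of_subset_of_nonneg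
          (cutEdges_expansionToward_sdiff_subset Edges x y α) fun e he _ => ?_
        exact hw e (mem_cutEdges.1 (mem_sdiff.1 (mem_filter.1 he).1).1).1
    _ = 2 * ∑ e ∈ T, w e :=
        sum_sum_filter_endpoint_eq_two_mul T y
          (fun e he => (mem_cutEdges.1 (mem_sdiff.1 he).1).2) w

theorem stmt4 {V : Type*} [Fintype V] [DecidableEq V] {k : ℕ}
    (Edges : Finset (V × V)) (w : V × V → ℝ) (hw : ∀ e ∈ Edges, 0 ≤ w e)
    (x y : V → Fin k) :
    ∑ α : Fin k, ∑ e ∈ cutEdges Edges (expansionToward x y α) \ cutEdges Edges x, w e ≤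
      2 * ∑ e ∈ cutEdges Edges y \ cutEdges Edges x, w e :=
  stmt4_general Edges w hw x y
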